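/- Let K ≥ 1, 0 < β ≤ 1/K, η > 0, let x, y ∈ Δ^{[K],β}, and let g ∈ ℝ_{≥0}^K. Let z be a minimizer over x' ∈ Δ^{[K],β} of ⟨−η·g, x'⟩ + D_Ψ(x', x), and let z̃ ∈ ℝ_{>0}^K be given by z̃ᵢ = xᵢ·exp(η·gᵢ). Then ⟨g, y − x⟩ ≤ η^{−1}·D_Ψ(y, x) − η^{−1}·D_Ψ(y, z) + η^{−1}·D_Ψ(x, z̃). -/

import Mathlib

/-!
Shifting the objective by `-η g` is the same as replacing `x` by `z̃ = x ⊙ exp (η g)`, so `z` is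
the Bregman projection of `z̃` onto the convex set `Δ^{[K],β}`. First-order optimality of that
projection together with the three-point identity gives the generalized Pythagorean inequality
`D_Ψ(y, z) ≤ D_Ψ(y, z̃)`, and the three-point identity for `(y, x, z̃)` reads
`D_Ψ(y, z̃) = D_Ψ(y, x) + D_Ψ(x, z̃) - η ⟨g, y - x⟩`.
-/

/-- The Bregman divergence induced by the unnormalized negative entropy
`Ψ(x) = Σᵢ (xᵢ ln xᵢ − xᵢ)`, i.e. `D_Ψ(y, x) = Σᵢ (yᵢ ln(yᵢ/xᵢ) − yᵢ + xᵢ)`. -/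
noncomputable def DPsi {K : ℕ} (y x : Fin K → ℝ) : ℝ :=
  ∑ i, (y i * Real.log (y i / x i) - y i + x i)

/-- The `β`-truncated probability simplex `Δ^{[K],β}`. -/
def simplexB (K : ℕ) (β : ℝ) : Set (Fin K → ℝ) :=
  {x | (∀ i, β ≤ x i) ∧ ∑ i, x i = 1}

open Real Finset

lemma mul_log_div_sub_mul_log_div (y : ℝ) {x w : ℝ} (hx : x ≠ 0) (hw : w ≠ 0) :
    y * log (y / x) - y * log (y / w) = y * (log w - log x) := by
  rcases eq_or_ne y 0 with rfl | hy
  · simp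
  · rw [log_div hy hx, log_div hy hw]
    ring

theorem DPsi_nonneg {K : ℕ} {y x : Fin K → ℝ} (hy : ∀ i, 0 ≤ y i) (hx : ∀ i, 0 < x i) :
    0 ≤ DPsi y x := by
  refine sum_nonneg fun i _ => ?_
  have hkl : x i * InformationTheory.klFun (y i / x i) = y i * log (y i / x i) - y i + x i := by
    have hx0 := (hx i).ne'
    rw [InformationTheory.klFun_apply]
    field_simp
    ring
  rw [← hkl]
  exact mul_nonneg (hx i).le (InformationTheory.klFun_nonneg (div_nonneg (hy i) (hx i).le))

theorem DPsi_three_point {K : ℕ} (y : Fin K → ℝ) {x w : Fin K → ℝ} (hx : ∀ i, x i ≠ 0)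
    (hw : ∀ i, w i ≠ 0) :
    DPsi y w = DPsi y x + DPsi x w + ∑ i, (log (x i) - log (w i)) * (y i - x i) := by
  simp only [DPsi, ← sum_add_distrib]
  refine sum_congr rfl fun i _ => ?_
  rw [log_div (hx i) (hw i)]
  linear_combination -mul_log_div_sub_mul_log_div (y i) (hx i) (hw i)

theorem DPsi_mul_exp {K : ℕ} (w : Fin K → ℝ) {x : Fin K → ℝ} (hx : ∀ i, x i ≠ 0)
    (a : Fin K → ℝ) :
    DPsi w (fun i => x i * exp (a i)) =
      (∑ i, -a i * w i) + DPsi w x + ∑ i, (x i * exp (a i) - x i) := by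
  simp only [DPsi, ← sum_add_distrib]
  refine sum_congr rfl fun i _ => ?_
  have := mul_log_div_sub_mul_log_div (w i) (hx i) (mul_ne_zero (hx i) (exp_ne_zero (a i)))
  rw [log_mul (hx i) (exp_ne_zero _), log_exp] at this
  linear_combination -this

lemma hasDerivAt_mul_log_div_sub_add {t c : ℝ} (ht : t ≠ 0) (hc : c ≠ 0) :
    HasDerivAt (fun s => s * log (s / c) - s + c) (log t - log c) t := by
  have hlog := ((hasDerivAt_id' t).div_const c).log (div_ne_zero ht hc)
  refine (((hasDerivAt_id' t).fun_mul hlog).fun_sub (hasDerivAt_id' t)).add_const c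
    |>.congr_deriv ?_
  field_simp
  rw [log_div ht hc]
  ring

theorem hasFDerivAt_DPsi_left {K : ℕ} {v w : Fin K → ℝ} (hv : ∀ i, v i ≠ 0)
    (hw : ∀ i, w i ≠ 0) :
    HasFDerivAt (fun u => DPsi u w)
      (∑ i, (log (v i) - log (w i)) • ContinuousLinearMap.proj (R := ℝ) (φ := fun _ => ℝ) i)
      v := by
  refine HasFDerivAt.fun_sum fun i _ => ?_
  have h := (hasDerivAt_mul_log_div_sub_add (hv i) (hw i)).comp_hasFDerivAt v
    (hasFDerivAt_apply (𝕜 := ℝ) i v)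
  exact h

theorem convex_simplexB (K : ℕ) (β : ℝ) : Convex ℝ (simplexB K β) := by
  intro u hu v hv a b ha hb hab
  refine ⟨fun i => ?_, ?_⟩
  · have hβ : a * β + b * β = β := by rw [← add_mul, hab, one_mul]
    simp only [Pi.add_apply, Pi.smul_apply, smul_eq_mul]
    linarith [mul_le_mul_of_nonneg_left (hu.1 i) ha, mul_le_mul_of_nonneg_left (hv.1 i) hb]
  · simp [sum_add_distrib, ← mul_sum, hu.2, hv.2, hab]

theorem sum_log_sub_log_mul_sub_nonneg_of_isMinOn {K : ℕ} {C : Set (Fin K → ℝ)}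
    (hC : Convex ℝ C) {y z w : Fin K → ℝ} (hy : y ∈ C) (hz : z ∈ C) (hz0 : ∀ i, z i ≠ 0)
    (hw : ∀ i, w i ≠ 0) (hmin : IsMinOn (fun u => DPsi u w) C z) :
    0 ≤ ∑ i, (log (z i) - log (w i)) * (y i - z i) := by
  simpa using hmin.localize.hasFDerivWithinAt_nonneg
    (hasFDerivAt_DPsi_left hz0 hw).hasFDerivWithinAt
    (sub_mem_posTangentConeAt_of_segment_subset (hC.segment_subset hz hy))

theorem DPsi_le_DPsi_of_isMinOn {K : ℕ} {C : Set (Fin K → ℝ)} (hC : Convex ℝ C)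
    {y z w : Fin K → ℝ} (hy : y ∈ C) (hz : z ∈ C) (hz0 : ∀ i, 0 < z i) (hw : ∀ i, 0 < w i)
    (hmin : IsMinOn (fun u => DPsi u w) C z) :
    DPsi y z ≤ DPsi y w := by
  have hopt := sum_log_sub_log_mul_sub_nonneg_of_isMinOn hC hy hz (fun i => (hz0 i).ne')
    (fun i => (hw i).ne') hmin
  rw [DPsi_three_point y (fun i => (hz0 i).ne') (fun i => (hw i).ne')]
  linarith [DPsi_nonneg (fun i => (hz0 i).le) hw]

theorem omd_single_step_general (K : ℕ) (β η : ℝ)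
    (hβ0 : 0 < β) (hη : 0 < η)
    (x y g z ztilde : Fin K → ℝ)
    (hx : x ∈ simplexB K β) (hy : y ∈ simplexB K β)
    (hzmem : z ∈ simplexB K β)
    (hzmin : ∀ x' ∈ simplexB K β,
      (∑ i, -(η * g i) * z i) + DPsi z x ≤ (∑ i, -(η * g i) * x' i) + DPsi x' x)
    (hztilde : ∀ i, ztilde i = x i * Real.exp (η * g i)) :
    ∑ i, g i * (y i - x i) ≤
      η⁻¹ * DPsi y x - η⁻¹ * DPsi y z + η⁻¹ * DPsi x ztilde := by
  have hpos : ∀ v ∈ simplexB K β, ∀ i, 0 < v i := fun v hv i => hβ0.trans_le (hv.1 i)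
  have hx0 : ∀ i, x i ≠ 0 := fun i => (hpos x hx i).ne'
  obtain rfl : ztilde = fun i => x i * exp (η * g i) := funext hztilde
  have hproj : IsMinOn (fun u => DPsi u (fun i => x i * exp (η * g i))) (simplexB K β) z := by
    refine isMinOn_iff.2 fun u hu => ?_
    simp only [DPsi_mul_exp _ hx0]
    linarith [hzmin u hu]
  have hpyth := DPsi_le_DPsi_of_isMinOn (convex_simplexB K β) hy hzmem (hpos z hzmem)
    (fun i => mul_pos (hpos x hx i) (exp_pos _)) hproj
  have hgrad : ∑ i, (log (x i) - log (x i * exp (η * g i))) * (y i - x i)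
      = -(η * ∑ i, g i * (y i - x i)) := by
    rw [mul_sum, ← sum_neg_distrib]
    refine sum_congr rfl fun i _ => ?_
    rw [log_mul (hx0 i) (exp_ne_zero _), log_exp]
    ring
  rw [DPsi_three_point y hx0 (fun i => mul_ne_zero (hx0 i) (exp_ne_zero _)), hgrad] at hpyth
  rw [← mul_sub, ← mul_add, le_inv_mul_iff₀ hη]
  linarith

/-- the single-step online-mirror-descent inequality
`⟨g, y − x⟩ ≤ η⁻¹·D_Ψ(y, x) − η⁻¹·D_Ψ(y, z) + η⁻¹·D_Ψ(x, z̃)`. -/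
theorem omd_single_step (K : ℕ) (hK : 1 ≤ K) (β η : ℝ)
    (hβ0 : 0 < β) (hβK : β ≤ 1 / (K : ℝ)) (hη : 0 < η)
    (x y g z ztilde : Fin K → ℝ)
    (hx : x ∈ simplexB K β) (hy : y ∈ simplexB K β)
    (hg : ∀ i, 0 ≤ g i)
    (hzmem : z ∈ simplexB K β)
    (hzmin : ∀ x' ∈ simplexB K β,
      (∑ i, -(η * g i) * z i) + DPsi z x ≤ (∑ i, -(η * g i) * x' i) + DPsi x' x)
    (hztilde : ∀ i, ztilde i = x i * Real.exp (η * g i)) :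
    ∑ i, g i * (y i - x i) ≤
      η⁻¹ * DPsi y x - η⁻¹ * DPsi y z + η⁻¹ * DPsi x ztilde :=
  omd_single_step_general K β η hβ0 hη x y g z ztilde hx hy hzmem hzmin hztilde
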